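/- Let d1, d2 be coprime with 1 < d1 < d2. Then for all n ≥ 0, Σ_{s ∈ Δ(d1,d2)} sⁿ = −B_{n+1}/(n+1) − (1/(d1 d2 (n+1)(n+2)))·[B_{n+2}^{(2)}(0 | d1,d2) − B_{n+2}^{(2)}(d1 d2 | d1,d2)], where B_{n+2}^{(2)}(x | d1,d2) = Σ_{j=0}^{n+2} Σ_{k=0}^{j} C(n+2,j) C(j,k) d1^{j−k} d2^{n+2−j} B_{j−k} B_{n+2−j} x^k. -/

import Mathlib

/-!
Write `S` for the semigroup generated by `d1, d2` and `Δ` for its complement. Every `s ∈ S` has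
exactly one representation `s = a d1 + b d2` with `a < d2`, so
`∑_{s ∈ S} X^s = (1 + X^{d1} + ⋯ + X^{(d2-1) d1}) / (1 - X^{d2})
  = (1 - X^{d1 d2}) / ((1 - X^{d1}) (1 - X^{d2}))`,
and the gap polynomial `P = ∑_{s ∈ Δ} X^s` satisfies
`P (1 - X) (1 - X^{d1}) (1 - X^{d2}) = (1 - X^{d1}) (1 - X^{d2}) - (1 - X^{d1 d2}) (1 - X)`.
Substitute `X = e^t` and multiply by `t/(e^t - 1) · d1 t/(e^{d1 t} - 1) · d2 t/(e^{d2 t} - 1)`: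
each factor `(1 - e^{c t})` turns into `-c t`, leaving
`d1 d2 (t² P(e^t) + t · t/(e^t - 1))
  = (e^{d1 d2 t} - 1) · d1 t/(e^{d1 t} - 1) · d2 t/(e^{d2 t} - 1)`,
whose right side is the difference of the generating functions of `B^{(2)}(d1 d2)` and `B^{(2)}(0)`.
The formula is the coefficient of `t^{n+2}`.
-/

open Finset Nat PowerSeries

theorem Nat.existsUnique_lt_of_mem_span {d1 d2 s : ℕ} (hd2 : d2 ≠ 0) (hcop : d1.Coprime d2)
    (hs : ∃ x1 x2, s = x1 * d1 + x2 * d2) : ∃! a, a < d2 ∧ ∃ b, s = a * d1 + b * d2 := by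
  have hpos := Nat.pos_of_ne_zero hd2
  obtain ⟨x1, x2, rfl⟩ := hs
  refine ⟨x1 % d2, ⟨Nat.mod_lt _ hpos, x2 + x1 / d2 * d1, ?_⟩, ?_⟩
  · conv_lhs => rw [← Nat.mod_add_div x1 d2]
    ring
  · rintro a ⟨ha, b, hb⟩
    have hmod : a * d1 ≡ x1 % d2 * d1 [MOD d2] :=
      calc a * d1 ≡ x1 * d1 + x2 * d2 [MOD d2] := by
            rw [hb, Nat.ModEq, Nat.add_mul_mod_self_right]
        _ ≡ x1 * d1 [MOD d2] := by rw [Nat.ModEq, Nat.add_mul_mod_self_right]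
        _ ≡ x1 % d2 * d1 [MOD d2] := (Nat.mod_modEq x1 d2).symm.mul_right d1
    exact (hmod.cancel_right_of_coprime (Nat.coprime_comm.mp hcop)).eq_of_lt_of_lt ha
      (Nat.mod_lt _ hpos)

namespace PowerSeries

variable {R : Type*} [CommRing R]

theorem one_sub_X_pow_mul_expand_mk_one {d : ℕ} (hd : d ≠ 0) :
    (1 - X ^ d) * expand d hd (mk 1) = (1 : R⟦X⟧) := by
  rw [← expand_X d hd, ← map_one (expand d hd), ← map_sub, ← map_mul, mul_comm,
    mk_one_mul_one_sub_eq_one, map_one]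

theorem coeff_X_pow_mul_expand_mk_one {d : ℕ} (hd : d ≠ 0) (k s : ℕ) :
    coeff s (X ^ k * expand d hd (mk 1) : R⟦X⟧) = {m | ∃ b, m = k + b * d}.indicator 1 s := by
  classical
  rw [coeff_X_pow_mul', coeff_expand, coeff_mk]
  split_ifs with hks hdvd
  · obtain ⟨b, hb⟩ := hdvd
    rw [Set.indicator_of_mem (show s ∈ {m | ∃ b, m = k + b * d} from
      ⟨b, by rw [mul_comm, ← hb]; omega⟩)]
    rfl
  · refine (Set.indicator_of_notMem ?_ _).symm
    rintro ⟨b, rfl⟩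
    exact hdvd ⟨b, by rw [Nat.add_sub_cancel_left, mul_comm]⟩
  · refine (Set.indicator_of_notMem ?_ _).symm
    rintro ⟨b, rfl⟩
    omega

theorem mk_indicator_span_eq_sum_mul_expand {d1 d2 : ℕ} (hd2 : d2 ≠ 0) (hcop : d1.Coprime d2) :
    mk ({s | ∃ x1 x2, s = x1 * d1 + x2 * d2}.indicator 1) =
      (∑ a ∈ range d2, (X ^ d1) ^ a) * expand d2 hd2 (mk 1 : R⟦X⟧) := by
  classical
  ext s
  simp only [coeff_mk, sum_mul, map_sum, ← pow_mul', coeff_X_pow_mul_expand_mk_one,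
    Set.indicator_apply, Set.mem_ofPred_eq, Pi.one_apply, sum_boole]
  split_ifs with hs
  · obtain ⟨a, ⟨ha, hab⟩, huniq⟩ := Nat.existsUnique_lt_of_mem_span hd2 hcop hs
    have hfilter : {a ∈ range d2 | ∃ b, s = a * d1 + b * d2} = {a} :=
      eq_singleton_iff_unique_mem.mpr ⟨mem_filter.mpr ⟨mem_range.mpr ha, hab⟩,
        fun y hy => huniq y ⟨mem_range.mp (mem_filter.mp hy).1, (mem_filter.mp hy).2⟩⟩
    simp [hfilter]
  · have hfilter : {a ∈ range d2 | ∃ b, s = a * d1 + b * d2} = ∅ :=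
      filter_eq_empty_iff.mpr fun a _ ⟨b, hb⟩ => hs ⟨a, b, hb⟩
    simp [hfilter]

theorem one_sub_X_pow_mul_one_sub_X_pow_mul_mk_indicator_span {d1 d2 : ℕ} (hd2 : d2 ≠ 0)
    (hcop : d1.Coprime d2) :
    (1 - X ^ d1) * (1 - X ^ d2) * mk ({s | ∃ x1 x2, s = x1 * d1 + x2 * d2}.indicator 1) =
      (1 - X ^ (d1 * d2) : R⟦X⟧) := by
  rw [mk_indicator_span_eq_sum_mul_expand hd2 hcop, mul_mul_mul_comm, mul_neg_geom_sum,
    one_sub_X_pow_mul_expand_mk_one hd2, mul_one, pow_mul]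

end PowerSeries

namespace Polynomial

variable {R : Type*} [CommRing R]

theorem coe_sum_X_pow_toFinset {A : Set ℕ} (hA : A.Finite) :
    ((∑ s ∈ hA.toFinset, X ^ s : R[X]) : PowerSeries R) = PowerSeries.mk (A.indicator 1) := by
  classical
  ext n
  simp [coeff_coe, coeff_X_pow, Set.indicator_apply]

theorem sum_X_pow_gaps_mul {d1 d2 : ℕ} (hd2 : d2 ≠ 0) (hcop : d1.Coprime d2)
    (hfin : {s | ¬ ∃ x1 x2, s = x1 * d1 + x2 * d2}.Finite) :
    (∑ s ∈ hfin.toFinset, X ^ s : R[X]) * ((1 - X) * (1 - X ^ d1) * (1 - X ^ d2)) =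
      (1 - X ^ d1) * (1 - X ^ d2) - (1 - X ^ (d1 * d2)) * (1 - X) := by
  rw [← coe_inj]
  push_cast [coe_sum_X_pow_toFinset, ← Set.compl_ofPred, Set.indicator_compl]
  have hsub : ∀ f g : ℕ → R, PowerSeries.mk (f - g) = PowerSeries.mk f - PowerSeries.mk g :=
    fun _ _ => rfl
  rw [hsub]
  linear_combination ((1 - PowerSeries.X ^ d1) * (1 - PowerSeries.X ^ d2)) *
      PowerSeries.mk_one_mul_one_sub_eq_one R -
    (1 - PowerSeries.X) *
      PowerSeries.one_sub_X_pow_mul_one_sub_X_pow_mul_mk_indicator_span (R := R) hd2 hcop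

end Polynomial

namespace PowerSeries

variable {A : Type*} [CommRing A] [Algebra ℚ A]

theorem rescale_bernoulliPowerSeries_mul_rescale_exp_sub_one (a : A) :
    rescale a (bernoulliPowerSeries A) * (rescale a (exp A) - 1) = C a * X := by
  simpa only [map_mul, map_sub, map_one, rescale_X] using
    congrArg (rescale a) (bernoulliPowerSeries_mul_exp_sub_one A)

theorem X_sq_mul_add_X_mul_bernoulliPowerSeries_eq {a b : ℕ} {E : A⟦X⟧}
    (hE : E * ((1 - exp A) * (1 - exp A ^ a) * (1 - exp A ^ b)) =
      (1 - exp A ^ a) * (1 - exp A ^ b) - (1 - exp A ^ (a * b)) * (1 - exp A)) :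
    C ((a : A) * b) * (X ^ 2 * E + X * bernoulliPowerSeries A) =
      rescale ((a : A) * b) (exp A) * rescale (a : A) (bernoulliPowerSeries A) *
          rescale (b : A) (bernoulliPowerSeries A) -
        rescale 0 (exp A) * rescale (a : A) (bernoulliPowerSeries A) *
          rescale (b : A) (bernoulliPowerSeries A) := by
  set B := bernoulliPowerSeries A
  set Ba := rescale (a : A) B
  set Bb := rescale (b : A) B
  have hB : (1 - exp A) * B = -X := by
    linear_combination -(bernoulliPowerSeries_mul_exp_sub_one A)
  have hBa : (1 - exp A ^ a) * Ba = -(C (a : A) * X) := by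
    rw [exp_pow_eq_rescale_exp]
    linear_combination -(rescale_bernoulliPowerSeries_mul_rescale_exp_sub_one (a : A))
  have hBb : (1 - exp A ^ b) * Bb = -(C (b : A) * X) := by
    rw [exp_pow_eq_rescale_exp]
    linear_combination -(rescale_bernoulliPowerSeries_mul_rescale_exp_sub_one (b : A))
  have hEB : E * ((1 - exp A) * B) * ((1 - exp A ^ a) * Ba) * ((1 - exp A ^ b) * Bb) =
      ((1 - exp A ^ a) * Ba) * ((1 - exp A ^ b) * Bb) * B
        - (1 - exp A ^ (a * b)) * ((1 - exp A) * B) * (Ba * Bb) := by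
    linear_combination (B * Ba * Bb) * hE
  rw [hB, hBa, hBb, exp_pow_eq_rescale_exp] at hEB
  apply X_mul_cancel
  rw [rescale_zero, RingHom.comp_apply, constantCoeff_exp, map_one, map_mul]
  push_cast at hEB
  linear_combination -hEB

theorem coeff_bernoulliPowerSeries (j : ℕ) :
    coeff j (bernoulliPowerSeries ℚ) = bernoulli j / j ! := by
  simp [bernoulliPowerSeries]

theorem coeff_rescale_bernoulliPowerSeries (a : ℚ) (j : ℕ) :
    coeff j (rescale a (bernoulliPowerSeries ℚ)) = a ^ j * bernoulli j / j ! := by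
  simp [bernoulliPowerSeries, coeff_rescale, mul_div_assoc]

theorem coeff_rescale_exp (x : ℚ) (k : ℕ) : coeff k (rescale x (exp ℚ)) = x ^ k / k ! := by
  simp [coeff_rescale, coeff_exp, div_eq_mul_inv]

theorem coeff_sum_exp_pow (s : Finset ℕ) (n : ℕ) :
    coeff n (∑ i ∈ s, exp ℚ ^ i) = (∑ i ∈ s, (i : ℚ) ^ n) / n ! := by
  simp only [map_sum, exp_pow_eq_rescale_exp, coeff_rescale_exp, sum_div]

end PowerSeries

/-- `B_m^{(2)}(x | a, b)`. -/
def secondOrderBernoulli (a b : ℚ) (m : ℕ) (x : ℚ) : ℚ :=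
  ∑ j ∈ range (m + 1), ∑ k ∈ range (j + 1),
    (m.choose j : ℚ) * (j.choose k : ℚ) * a ^ (j - k) * b ^ (m - j) *
      bernoulli (j - k) * bernoulli (m - j) * x ^ k

theorem coeff_rescale_exp_mul_rescale_bernoulliPowerSeries_mul (a b x : ℚ) (m : ℕ) :
    coeff m (rescale x (exp ℚ) * rescale a (bernoulliPowerSeries ℚ) *
        rescale b (bernoulliPowerSeries ℚ)) = secondOrderBernoulli a b m x / m ! := by
  rw [secondOrderBernoulli, sum_div, coeff_mul, Nat.sum_antidiagonal_eq_sum_range_succ_mk]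
  refine sum_congr rfl fun j hj => ?_
  rw [coeff_mul, Nat.sum_antidiagonal_eq_sum_range_succ_mk, sum_mul, sum_div]
  refine sum_congr rfl fun k hk => ?_
  have hjm : j ≤ m := Nat.lt_succ_iff.mp (mem_range.mp hj)
  have hkj : k ≤ j := Nat.lt_succ_iff.mp (mem_range.mp hk)
  rw [coeff_rescale_exp, coeff_rescale_bernoulliPowerSeries, coeff_rescale_bernoulliPowerSeries,
    Nat.cast_choose ℚ hjm, Nat.cast_choose ℚ hkj]
  field_simp

theorem power_sum_two_generators_second_order_bernoulli_general (d1 d2 : ℕ)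
    (h1 : 1 < d1) (hcop : Nat.gcd d1 d2 = 1)
    (hfin : {s : ℕ | ¬ ∃ x1 x2 : ℕ, s = x1 * d1 + x2 * d2}.Finite) (n : ℕ) :
    ∑ s ∈ hfin.toFinset, (s : ℚ) ^ n =
      -bernoulli (n + 1) / ((n : ℚ) + 1) -
        (1 / ((d1 : ℚ) * (d2 : ℚ) * ((n : ℚ) + 1) * ((n : ℚ) + 2))) *
          ((∑ j ∈ Finset.range (n + 3), ∑ k ∈ Finset.range (j + 1),
              ((n + 2).choose j : ℚ) * (j.choose k : ℚ) * (d1 : ℚ) ^ (j - k) *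
                (d2 : ℚ) ^ (n + 2 - j) * bernoulli (j - k) * bernoulli (n + 2 - j) *
                (0 : ℚ) ^ k) -
            (∑ j ∈ Finset.range (n + 3), ∑ k ∈ Finset.range (j + 1),
              ((n + 2).choose j : ℚ) * (j.choose k : ℚ) * (d1 : ℚ) ^ (j - k) *
                (d2 : ℚ) ^ (n + 2 - j) * bernoulli (j - k) * bernoulli (n + 2 - j) *
                ((d1 : ℚ) * (d2 : ℚ)) ^ k)) := by
  change _ = _ - _ * (secondOrderBernoulli d1 d2 (n + 2) 0 -
    secondOrderBernoulli d1 d2 (n + 2) (d1 * d2))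
  have hd2 : d2 ≠ 0 := by
    rintro rfl
    rw [Nat.gcd_zero_right] at hcop
    omega
  have hE := congrArg (Polynomial.aeval (exp ℚ))
    (Polynomial.sum_X_pow_gaps_mul (R := ℚ) hd2 hcop hfin)
  simp only [map_mul, map_sub, map_one, map_pow, map_sum, Polynomial.aeval_X] at hE
  have key := congrArg (coeff (n + 2)) (X_sq_mul_add_X_mul_bernoulliPowerSeries_eq hE)
  rw [coeff_C_mul, map_add, coeff_X_pow_mul, coeff_succ_X_mul, map_sub,
    coeff_rescale_exp_mul_rescale_bernoulliPowerSeries_mul,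
    coeff_rescale_exp_mul_rescale_bernoulliPowerSeries_mul, coeff_sum_exp_pow,
    coeff_bernoulliPowerSeries] at key
  have hfac₁ : ((n + 1)! : ℚ) = (n + 1) * n ! := by push_cast [Nat.factorial_succ]; ring
  have hfac₂ : ((n + 2)! : ℚ) = (n + 2) * ((n + 1) * n !) := by
    push_cast [Nat.factorial_succ]; ring
  rw [hfac₁, hfac₂] at key
  field_simp at key ⊢
  linear_combination key

theorem power_sum_two_generators_second_order_bernoulli (d1 d2 : ℕ)
    (h1 : 1 < d1) (h12 : d1 < d2) (hcop : Nat.gcd d1 d2 = 1)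
    (hfin : {s : ℕ | ¬ ∃ x1 x2 : ℕ, s = x1 * d1 + x2 * d2}.Finite) (n : ℕ) :
    ∑ s ∈ hfin.toFinset, (s : ℚ) ^ n =
      -bernoulli (n + 1) / ((n : ℚ) + 1) -
        (1 / ((d1 : ℚ) * (d2 : ℚ) * ((n : ℚ) + 1) * ((n : ℚ) + 2))) *
          ((∑ j ∈ Finset.range (n + 3), ∑ k ∈ Finset.range (j + 1),
              ((n + 2).choose j : ℚ) * (j.choose k : ℚ) * (d1 : ℚ) ^ (j - k) *
                (d2 : ℚ) ^ (n + 2 - j) * bernoulli (j - k) * bernoulli (n + 2 - j) *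
                (0 : ℚ) ^ k) -
            (∑ j ∈ Finset.range (n + 3), ∑ k ∈ Finset.range (j + 1),
              ((n + 2).choose j : ℚ) * (j.choose k : ℚ) * (d1 : ℚ) ^ (j - k) *
                (d2 : ℚ) ^ (n + 2 - j) * bernoulli (j - k) * bernoulli (n + 2 - j) *
                ((d1 : ℚ) * (d2 : ℚ)) ^ k)) :=
  power_sum_two_generators_second_order_bernoulli_general d1 d2 h1 hcop hfin n
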